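/- Let α be irrational with continued fraction convergent denominators (q_n), let β be a real number, and let τ₂ ≥ 2. Suppose p ∈ ℤ and q ∈ ℕ satisfy |β − p/q| ≤ 1/q^{τ₂}, and let q' = q_n be the denominator of some convergent of α satisfying 4q' ≤ q^{τ₂/2}. Then for any integers j ≠ j' with |j − j'| < q' and any integers k, k' with k ≡ k' (mod q) and |k − k'| < q', one has ‖(αj + βk) − (αj' + βk')‖ ≥ 1/(4q'), where ‖x‖ denotes the distance from x to the nearest integer. -/

import Mathlib

/-!
Write `j - j' = a` and `k - k' = qM`. Up to an integer, `(αj + βk) - (αj' + βk')` is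
`aα + (β - p/q)qM`, and the perturbation `(β - p/q)(k - k')` has size at most
`q' / q^τ₂ ≤ 1/(16q')`. On the other hand the convergents are best approximations: if `q' = q_{m+1}`
and `0 < |a| < q'`, write `(a, b) = X (q_m, p_m) + Y (q_{m+1}, p_{m+1})` with integers `X, Y`
(the determinant is `±1`). Then `X ≠ 0` and `X, Y` have opposite signs, while the errors
`q_m α - p_m` and `q_{m+1} α - p_{m+1}` alternate in sign, so no cancellation occurs and
`|aα - b| ≥ |q_m α - p_m| > 1/(q_m + q_{m+1}) ≥ 1/(2q')`.
-/

noncomputable section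

/-- The distance from `x` to the nearest integer, `‖x‖`. -/
def distNearestInt (x : ℝ) : ℝ := |x - round x|

theorem abs_le_abs_add_of_mul_nonneg {R : Type*} [Ring R] [LinearOrder R] [IsStrictOrderedRing R]
    {a b : R} (h : 0 ≤ a * b) : |a| ≤ |a + b| := by
  rw [(abs_add_eq_add_abs_iff a b).2 (mul_nonneg_iff.1 h)]
  exact le_add_of_nonneg_right (abs_nonneg b)

theorem exists_mul_add_mul_eq_of_isUnit_det {R : Type*} [CommRing R] {P Q P' Q' : R}
    (hdet : IsUnit (P * Q' - Q * P')) (a b : R) :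
    ∃ X Y : R, X * Q + Y * Q' = a ∧ X * P + Y * P' = b := by
  obtain ⟨u, hu⟩ := hdet.exists_left_inv
  exact ⟨u * (b * Q' - a * P'), u * (a * P - b * Q), by linear_combination a * hu,
    by linear_combination b * hu⟩

section IntCombination

variable {R : Type*} [CommRing R] [LinearOrder R] [IsStrictOrderedRing R]

theorem ne_zero_and_mul_nonpos_of_abs_int_mul_add_int_mul_lt {X Y : ℤ} {s t : R} (hs : 0 ≤ s)
    (ht : 0 < t) (hne : X * s + Y * t ≠ 0) (hlt : |X * s + Y * t| < t) :
    X ≠ 0 ∧ X * Y ≤ 0 := by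
  have hlarge : 0 ≤ X * Y → Y ≠ 0 → t ≤ |X * s + Y * t| := by
    intro hXY hY
    have hprod : 0 ≤ Y * t * (X * s) := by
      rw [show Y * t * (X * s) = ((X * Y : ℤ) : R) * (s * t) by push_cast; ring]
      exact mul_nonneg (by exact_mod_cast hXY) (mul_nonneg hs ht.le)
    calc t ≤ |(Y : R)| * t := le_mul_of_one_le_left ht.le (by exact_mod_cast Int.one_le_abs hY)
      _ = |Y * t| := by rw [abs_mul, abs_of_pos ht]
      _ ≤ |Y * t + X * s| := abs_le_abs_add_of_mul_nonneg hprod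
      _ = |X * s + Y * t| := by rw [add_comm]
  have hXY : X * Y ≤ 0 := by
    by_contra! hXY
    exact (hlarge hXY.le (right_ne_zero_of_mul hXY.ne')).not_gt hlt
  refine ⟨?_, hXY⟩
  rintro rfl
  refine (hlarge (by simp) ?_).not_gt hlt
  rintro rfl
  simp at hne

theorem abs_le_abs_int_mul_add_int_mul {X Y : ℤ} {u w : R} (hX : X ≠ 0) (hXY : X * Y ≤ 0)
    (huw : u * w ≤ 0) : |u| ≤ |X * u + Y * w| := by
  have hprod : 0 ≤ X * u * (Y * w) := by
    rw [show X * u * (Y * w) = ((X * Y : ℤ) : R) * (u * w) by push_cast; ring]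
    exact mul_nonneg_of_nonpos_of_nonpos (by exact_mod_cast hXY) huw
  calc |u| ≤ |(X : R)| * |u| :=
        le_mul_of_one_le_left (abs_nonneg u) (by exact_mod_cast Int.one_le_abs hX)
    _ = |X * u| := (abs_mul _ _).symm
    _ ≤ |X * u + Y * w| := abs_le_abs_add_of_mul_nonneg hprod

end IntCombination

theorem abs_mul_le_one_div_of_abs_le_one_div_sq {K : Type*} [Field K] [LinearOrder K]
    [IsStrictOrderedRing K] {ε d Q r : K} (hε : |ε| ≤ 1 / Q ^ 2) (hQ : 4 * r ≤ Q)
    (hd : |d| ≤ r) (hr : 0 < r) : |ε * d| ≤ 1 / (16 * r) := by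
  calc |ε * d| = |ε| * |d| := abs_mul ε d
    _ ≤ 1 / Q ^ 2 * r := mul_le_mul hε hd (abs_nonneg d) (by positivity)
    _ ≤ 1 / (4 * r) ^ 2 * r := by gcongr
    _ = 1 / (16 * r) := by field_simp; ring

namespace GenContFract

variable {K : Type*} [Field K] [LinearOrder K] [FloorRing K] {v : K} {n : ℕ}

theorem exists_int_eq_of_contsAux (v : K) (n : ℕ) :
    ∃ a b : ℤ, (GenContFract.of v).contsAux n = ⟨a, b⟩ := by
  induction n using Nat.twoStepInduction with
  | zero => exact ⟨1, 0, by simp [contsAux]⟩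
  | one => exact ⟨⌊v⌋, 1, by simp [contsAux, of_h_eq_floor]⟩
  | more n ih₀ ih₁ =>
    obtain ⟨a₀, b₀, h₀⟩ := ih₀
    obtain ⟨a₁, b₁, h₁⟩ := ih₁
    cases hs : (GenContFract.of v).s.get? n with
    | none => exact ⟨a₁, b₁, (contsAux_stable_step_of_terminated hs).trans h₁⟩
    | some gp =>
      obtain ⟨z, hz⟩ := exists_int_eq_of_partDen (partDen_eq_s_b hs)
      refine ⟨z * a₁ + a₀, z * b₁ + b₀, ?_⟩
      rw [contsAux_recurrence hs h₀ h₁, of_partNum_eq_one (partNum_eq_s_a hs), hz]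
      congr 1 <;> push_cast <;> ring

theorem exists_int_eq_of_nums_dens (v : K) (n : ℕ) :
    ∃ a b : ℤ, (GenContFract.of v).nums n = a ∧ (GenContFract.of v).dens n = b := by
  obtain ⟨a, b, h⟩ := exists_int_eq_of_contsAux v (n + 1)
  exact ⟨a, b, congrArg Pair.a h, congrArg Pair.b h⟩

variable [IsStrictOrderedRing K]

theorem one_le_of_den : 1 ≤ (GenContFract.of v).dens n := by
  induction n with
  | zero => simp
  | succ n ih => exact ih.trans of_den_mono

theorem zero_lt_of_den : 0 < (GenContFract.of v).dens n :=
  zero_lt_one.trans_le one_le_of_den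

/-- `ifp.fr⁻¹` is the complete quotient `ξₙ₊₁`, so this is `qₙv - pₙ = (-1)ⁿ / (ξₙ₊₁qₙ + qₙ₋₁)`. -/
theorem neg_one_pow_mul_dens_mul_sub_nums_eq {ifp : IntFractPair K}
    (hstream : IntFractPair.stream v n = some ifp) (hfr : ifp.fr ≠ 0) :
    (-1) ^ n * ((GenContFract.of v).dens n * v - (GenContFract.of v).nums n)
      = (ifp.fr⁻¹ * (GenContFract.of v).dens n + ((GenContFract.of v).contsAux n).b)⁻¹ := by
  have herr := sub_convs_eq hstream
  simp only [hfr, if_false, conv_eq_num_div_den] at herr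
  rw [show ((GenContFract.of v).contsAux (n + 1)).b = (GenContFract.of v).dens n from rfl] at herr
  have hB : (GenContFract.of v).dens n ≠ 0 := zero_lt_of_den.ne'
  have hsq : ((-1 : K) ^ n) ^ 2 = 1 := by rw [← pow_mul, mul_comm, pow_mul]; simp
  set B := (GenContFract.of v).dens n
  calc (-1) ^ n * (B * v - (GenContFract.of v).nums n)
      = (-1) ^ n * B * (v - (GenContFract.of v).nums n / B) := by field_simp
    _ = ((-1) ^ n) ^ 2 * (B / (B * (ifp.fr⁻¹ * B + ((GenContFract.of v).contsAux n).b))) := by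
      rw [herr]; ring
    _ = _ := by rw [hsq, one_mul, div_mul_cancel_left₀ hB]

theorem one_div_dens_succ_add_dens_lt (h : ¬(GenContFract.of v).TerminatedAt n) :
    1 / ((GenContFract.of v).dens (n + 1) + (GenContFract.of v).dens n)
      < (-1) ^ n * ((GenContFract.of v).dens n * v - (GenContFract.of v).nums n) := by
  obtain ⟨gp, hs⟩ := Option.ne_none_iff_exists'.1 h
  obtain ⟨ifp_succ, hstream_succ, hb⟩ :=
    IntFractPair.exists_succ_get?_stream_of_gcf_of_get?_eq_some hs
  obtain ⟨ifp, hstream, hfr, rfl⟩ := IntFractPair.succ_nth_stream_eq_some_iff.1 hstream_succ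
  have hfr_pos : 0 < ifp.fr := (IntFractPair.nth_stream_fr_nonneg hstream).lt_of_ne' hfr
  have hfr_inv_lt : ifp.fr⁻¹ < gp.b + 1 := by
    rw [← hb]
    exact Int.lt_floor_add_one _
  have hdens_succ : (GenContFract.of v).dens (n + 1)
      = gp.b * (GenContFract.of v).dens n + ((GenContFract.of v).contsAux n).b := by
    change ((GenContFract.of v).contsAux (n + 2)).b = _
    rw [contsAux_recurrence hs rfl rfl, of_partNum_eq_one (partNum_eq_s_a hs)]
    simp only [one_mul]
    rfl
  have hB : 0 < (GenContFract.of v).dens n := zero_lt_of_den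
  have hpB : 0 ≤ ((GenContFract.of v).contsAux n).b := zero_le_of_contsAux_b
  rw [neg_one_pow_mul_dens_mul_sub_nums_eq hstream hfr, one_div]
  apply inv_strictAnti₀ (by positivity)
  rw [hdens_succ]
  nlinarith

theorem dens_mul_sub_nums_mul_succ_nonpos (h : ¬(GenContFract.of v).TerminatedAt (n + 1)) :
    ((GenContFract.of v).dens n * v - (GenContFract.of v).nums n) *
      ((GenContFract.of v).dens (n + 1) * v - (GenContFract.of v).nums (n + 1)) ≤ 0 := by
  have hpos : ∀ m, ¬(GenContFract.of v).TerminatedAt m →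
      0 < (-1) ^ m * ((GenContFract.of v).dens m * v - (GenContFract.of v).nums m) := fun m hm ↦
    (one_div_pos.2 (add_pos zero_lt_of_den zero_lt_of_den)).trans (one_div_dens_succ_add_dens_lt hm)
  have h₀ := hpos n (mt (terminated_stable n.le_succ) h)
  have h₁ := hpos (n + 1) h
  rcases neg_one_pow_eq_or K n with hsign | hsign <;>
    simp only [pow_succ, hsign] at h₀ h₁ <;> nlinarith

theorem one_div_two_mul_dens_le_abs_mul_sub (h : ¬(GenContFract.of v).TerminatedAt n) {a : ℤ}
    (b : ℤ) (ha : a ≠ 0) (hlt : |(a : K)| < (GenContFract.of v).dens n) :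
    1 / (2 * (GenContFract.of v).dens n) ≤ |a * v - b| := by
  obtain _ | m := n
  · have : (1 : K) ≤ |(a : K)| := by exact_mod_cast Int.one_le_abs ha
    rw [zeroth_den_eq_one] at hlt
    linarith
  have hm : ¬(GenContFract.of v).TerminatedAt m := mt (terminated_stable m.le_succ) h
  obtain ⟨P, Q, hP, hQ⟩ := exists_int_eq_of_nums_dens v m
  obtain ⟨P', Q', hP', hQ'⟩ := exists_int_eq_of_nums_dens v (m + 1)
  have hdet : P * Q' - Q * P' = (-1) ^ (m + 1) := by
    have := SimpContFract.determinant (s := SimpContFract.of v) hm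
    change (GenContFract.of v).nums m * (GenContFract.of v).dens (m + 1) -
      (GenContFract.of v).dens m * (GenContFract.of v).nums (m + 1) = _ at this
    rw [hP, hQ, hP', hQ'] at this
    exact_mod_cast this
  set q := (GenContFract.of v).dens
  set θ : ℕ → K := fun i ↦ q i * v - (GenContFract.of v).nums i
  obtain ⟨X, Y, rfl, rfl⟩ :=
    exists_mul_add_mul_eq_of_isUnit_det (hdet ▸ isUnit_neg_one.pow _) a b
  have ha_eq : ((X * Q + Y * Q' : ℤ) : K) = X * q m + Y * q (m + 1) := by
    rw [hQ, hQ']; push_cast; ring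
  have hb_eq : ((X * Q + Y * Q' : ℤ) : K) * v - ((X * P + Y * P' : ℤ) : K)
      = X * θ m + Y * θ (m + 1) := by
    simp only [θ, hP, hQ, hP', hQ']; push_cast; ring
  have hne : (X * q m + Y * q (m + 1) : K) ≠ 0 := by rw [← ha_eq]; exact_mod_cast ha
  rw [ha_eq] at hlt
  obtain ⟨hX, hXY⟩ := ne_zero_and_mul_nonpos_of_abs_int_mul_add_int_mul_lt
    zero_lt_of_den.le zero_lt_of_den hne hlt
  rw [hb_eq]
  calc 1 / (2 * q (m + 1)) ≤ 1 / (q (m + 1) + q m) :=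
        one_div_le_one_div_of_le (add_pos zero_lt_of_den zero_lt_of_den)
          (by linarith [of_den_mono (v := v) (n := m)])
    _ ≤ (-1) ^ m * θ m := (one_div_dens_succ_add_dens_lt hm).le
    _ ≤ |θ m| := (le_abs_self _).trans_eq (by simp [abs_mul])
    _ ≤ |X * θ m + Y * θ (m + 1)| :=
        abs_le_abs_int_mul_add_int_mul hX hXY (dens_mul_sub_nums_mul_succ_nonpos h)

end GenContFract

theorem Irrational.not_terminatedAt {ξ : ℝ} (hξ : Irrational ξ) (n : ℕ) :
    ¬(GenContFract.of ξ).TerminatedAt n := fun h ↦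
  let ⟨r, hr⟩ := (GenContFract.terminates_iff_rat ξ).1 ⟨n, h⟩
  hξ ⟨r, hr.symm⟩

theorem separation_of_orbit_points_general (α : ℝ) (hα : Irrational α) (β τ₂ : ℝ)
    (p : ℤ) (q : ℕ) (hq : 0 < q)
    (hβ : |β - (p : ℝ) / (q : ℝ)| ≤ 1 / (q : ℝ) ^ τ₂)
    -- `q'` is the denominator of some convergent of the continued fraction of `α`
    (n : ℕ) (q' : ℝ) (hq' : q' = (GenContFract.of α).dens n)
    (hq'small : 4 * q' ≤ (q : ℝ) ^ (τ₂ / 2))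
    (j j' : ℤ) (hjj' : j ≠ j') (hjlt : |((j - j' : ℤ) : ℝ)| < q')
    (k k' : ℤ) (hmod : k ≡ k' [ZMOD q]) (hklt : |((k - k' : ℤ) : ℝ)| < q') :
    1 / (4 * q') ≤
      distNearestInt ((α * (j : ℝ) + β * (k : ℝ)) - (α * (j' : ℝ) + β * (k' : ℝ))) := by
  subst hq'
  obtain ⟨M, hM⟩ := hmod.symm.dvd
  set x := (α * (j : ℝ) + β * (k : ℝ)) - (α * (j' : ℝ) + β * (k' : ℝ))
  have hsplit : x - round x = ((j - j' : ℤ) * α - (round x - p * M : ℤ))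
      + (β - p / q) * ((k - k' : ℤ) : ℝ) := by
    have hkk : (k : ℝ) - k' = q * M := by exact_mod_cast hM
    have hq0 : (q : ℝ) ≠ 0 := Nat.cast_ne_zero.2 hq.ne'
    simp only [x]
    push_cast
    field_simp
    linear_combination (p : ℝ) * hkk
  have hmain := GenContFract.one_div_two_mul_dens_le_abs_mul_sub (hα.not_terminatedAt n)
    (round x - p * M) (sub_ne_zero.2 hjj') hjlt
  have hsq : ((q : ℝ) ^ (τ₂ / 2)) ^ 2 = (q : ℝ) ^ τ₂ := by
    rw [← Real.rpow_mul_natCast (Nat.cast_nonneg q)]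
    norm_num
  have hperturb := abs_mul_le_one_div_of_abs_le_one_div_sq (hsq ▸ hβ) hq'small hklt.le
    GenContFract.zero_lt_of_den
  have hB := GenContFract.zero_lt_of_den (v := α) (n := n)
  unfold distNearestInt
  rw [hsplit]
  calc 1 / (4 * (GenContFract.of α).dens n)
      ≤ 1 / (2 * (GenContFract.of α).dens n) - 1 / (16 * (GenContFract.of α).dens n) := by
        field_simp; norm_num
    _ ≤ _ := by linarith
    _ ≤ _ := abs_sub_abs_le_abs_add _ _

theorem separation_of_orbit_points (α : ℝ) (hα : Irrational α) (β τ₂ : ℝ)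
    (hτ₂ : 2 ≤ τ₂) (p : ℤ) (q : ℕ) (hq : 0 < q)
    (hβ : |β - (p : ℝ) / (q : ℝ)| ≤ 1 / (q : ℝ) ^ τ₂)
    -- `q'` is the denominator of some convergent of the continued fraction of `α`
    (n : ℕ) (q' : ℝ) (hq' : q' = (GenContFract.of α).dens n)
    (hq'small : 4 * q' ≤ (q : ℝ) ^ (τ₂ / 2))
    (j j' : ℤ) (hjj' : j ≠ j') (hjlt : |((j - j' : ℤ) : ℝ)| < q')
    (k k' : ℤ) (hmod : k ≡ k' [ZMOD q]) (hklt : |((k - k' : ℤ) : ℝ)| < q') :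
    1 / (4 * q') ≤
      distNearestInt ((α * (j : ℝ) + β * (k : ℝ)) - (α * (j' : ℝ) + β * (k' : ℝ))) :=
  separation_of_orbit_points_general α hα β τ₂ p q hq hβ n q' hq' hq'small j j' hjj' hjlt k k' hmod
    hklt
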